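/- arXiv:2502.00987 — 2 statements merged into one kernel-verified Lean document; each statement's English description precedes it below -/
import Mathlib

section
/- Let D, r be positive integers with r ≤ D and let d be a positive integer with r ≤ d. Let B ∈ ℝ^{D×r} have entries drawn i.i.d. from the standard Gaussian distribution, let A ∈ ℝ^{r×d} have entries drawn i.i.d. from the standard Gaussian distribution, let Λ ∈ ℝ^{r×r} be a diagonal matrix whose diagonal entries are drawn i.i.d. from the standard Gaussian distribution, and let Γ ∈ ℝ^{d×d} be a diagonal matrix whose diagonal entries are drawn i.i.d. from the standard Gaussian distribution, with all draws independent. Then with probability 1 the D×d matrix B Λ A Γ has rank exactly r. -/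
/-!
A nonzero real polynomial in independent variables with atomless laws is almost surely nonzero:
by Fubini, fix all variables but one; for almost every choice of them some coefficient of the
remaining one-variable polynomial is nonzero, and it then has only finitely many roots.
Hence almost surely the top `r × r` minor of `B`, the left `r × r` minor of `A` and all diagonal
entries of `Λ` and `Γ` are nonzero. The corresponding `r × r` minor of `BΛAΓ` is then a product
of nonzero factors, so the rank is at least `r`, and it is at most `r` since the product
factors through `ℝ^r`.
-/

open MeasureTheory ProbabilityTheory

/-- The law of a random vector in `ℝ^k` with i.i.d. standard Gaussian entries. -/
noncomputable def gaussVec (k : ℕ) : Measure (Fin k → ℝ) :=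
  Measure.pi fun _ => gaussianReal 0 1

/-- The law of a random `m × k` real matrix (as a function) with i.i.d. standard
Gaussian entries. -/
noncomputable def gaussMat (m k : ℕ) : Measure (Fin m → Fin k → ℝ) :=
  Measure.pi fun _ => Measure.pi fun _ => gaussianReal 0 1

namespace Polynomial

theorem ae_eval_ne_zero {R : Type*} [CommRing R] [IsDomain R] [MeasurableSpace R]
    (μ : Measure R) [NullSingletonClass μ] {p : R[X]} (hp : p ≠ 0) :
    ∀ᵐ t ∂μ, p.eval t ≠ 0 :=
  measure_eq_zero_iff_ae_notMem.1 ((finite_setOfPred_isRoot hp).measure_zero μ)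

end Polynomial

namespace MvPolynomial

theorem ae_eval_ne_zero_fin {n : ℕ} (μ : Fin n → Measure ℝ) [∀ i, SigmaFinite (μ i)]
    [∀ i, NullSingletonClass (μ i)] {p : MvPolynomial (Fin n) ℝ} (hp : p ≠ 0) :
    ∀ᵐ x ∂Measure.pi μ, eval x p ≠ 0 := by
  induction n with
  | zero =>
    obtain ⟨c, rfl⟩ := C_surjective (Fin 0) p
    exact ae_of_all _ fun x => by simpa using hp
  | succ n ih =>
    let e := MeasurableEquiv.piFinSuccAbove (fun _ : Fin (n + 1) => ℝ) 0
    have hmp := measurePreserving_piFinSuccAbove μ 0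
    have hmeas : MeasurableSet {q : ℝ × (Fin n → ℝ) | eval (e.symm q) p ≠ 0} :=
      e.symm.measurable ((continuous_eval p).measurable (measurableSet_singleton 0).compl)
    suffices h : ∀ᵐ q ∂(μ 0).prod (Measure.pi fun j => μ (Fin.succAbove 0 j)),
        eval (e.symm q) p ≠ 0 by
      rw [← hmp.map_eq, e.measurableEmbedding.ae_map_iff] at h
      simpa using h
    rw [Measure.ae_prod_iff_ae_ae hmeas, Measure.ae_ae_comm hmeas]
    set q := finSuccEquiv ℝ n p
    have hq : q ≠ 0 := (EmbeddingLike.map_ne_zero_iff).2 hp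
    filter_upwards [ih _ (Polynomial.leadingCoeff_ne_zero.2 hq)] with y hy
    have hqy : q.map (eval y) ≠ 0 := fun h => hy <| by
      simpa [Polynomial.coeff_map] using congrArg (Polynomial.coeff · q.natDegree) h
    filter_upwards [Polynomial.ae_eval_ne_zero (μ 0) hqy] with t ht
    simpa [e, MeasurableEquiv.piFinSuccAbove_symm_apply, Fin.consEquiv,
      eval_eq_eval_mv_eval'] using ht

theorem ae_eval_ne_zero {ι : Type*} [Fintype ι] (μ : ι → Measure ℝ) [∀ i, SigmaFinite (μ i)]
    [∀ i, NullSingletonClass (μ i)] {p : MvPolynomial ι ℝ} (hp : p ≠ 0) :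
    ∀ᵐ x ∂Measure.pi μ, eval x p ≠ 0 := by
  let e := Fintype.equivFin ι
  have hmp := measurePreserving_piCongrLeft μ e.symm
  have h := ae_eval_ne_zero_fin (fun k => μ (e.symm k))
    ((map_ne_zero_iff _ (rename_injective e e.injective)).2 hp)
  filter_upwards [hmp.symm.quasiMeasurePreserving.ae h] with x hx
  simpa [eval_rename, Function.comp_def, MeasurableEquiv.piCongrLeft] using hx

theorem ae_eval_uncurry_ne_zero {ι κ : Type*} [Fintype ι] [Fintype κ] (μ : ι → κ → Measure ℝ)
    [∀ i j, IsProbabilityMeasure (μ i j)] [∀ i j, NullSingletonClass (μ i j)]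
    {p : MvPolynomial (ι × κ) ℝ} (hp : p ≠ 0) :
    ∀ᵐ x ∂Measure.pi fun i => Measure.pi fun j => μ i j, eval (Function.uncurry x) p ≠ 0 := by
  have hmap := Measure.infinitePi_map_curry μ
  simp only [Measure.infinitePi_eq_pi] at hmap
  rw [← hmap, (MeasurableEquiv.curry ι κ ℝ).measurableEmbedding.ae_map_iff]
  simpa [MeasurableEquiv.coe_curry] using ae_eval_ne_zero (fun q : ι × κ => μ q.1 q.2) hp

end MvPolynomial

theorem ae_det_submatrix_ne_zero {ι κ k : Type*} [Fintype ι] [Fintype κ] [Fintype k]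
    [DecidableEq k] (μ : ι → κ → Measure ℝ) [∀ i j, IsProbabilityMeasure (μ i j)]
    [∀ i j, NullSingletonClass (μ i j)] {f : k → ι} {g : k → κ} (hf : f.Injective)
    (hg : g.Injective) :
    ∀ᵐ x ∂Measure.pi fun i => Measure.pi fun j => μ i j,
      ((Matrix.of x).submatrix f g).det ≠ 0 := by
  have hdet := (map_ne_zero_iff _ (MvPolynomial.rename_injective _ (hf.prodMap hg))).2
    (Matrix.det_mvPolynomialX_ne_zero k ℝ)
  filter_upwards [MvPolynomial.ae_eval_uncurry_ne_zero μ hdet] with x hx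
  simp only [MvPolynomial.eval_rename, Matrix.eval_det_mvPolynomialX, Function.comp_def] at hx
  exact hx

namespace Matrix

theorem det_submatrix_mul_diagonal {m n k R : Type*} [Fintype n] [DecidableEq n] [Fintype k]
    [DecidableEq k] [CommRing R] (M : Matrix m n R) (v : n → R) (f : k → m) (g : k → n) :
    ((M * diagonal v).submatrix f g).det = (M.submatrix f g).det * ∏ i, v (g i) := by
  rw [show (M * diagonal v).submatrix f g = M.submatrix f g * diagonal (v ∘ g) by
    ext; simp [mul_diagonal], det_mul, det_diagonal]
  rfl

theorem rank_mul_eq_card_of_det_submatrix_ne_zero {m n k K : Type*} [Fintype n] [Fintype k]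
    [DecidableEq k] [Field K] {B : Matrix m k K} {C : Matrix k n K} {f : k → m} {g : k → n}
    (hB : (B.submatrix f id).det ≠ 0) (hC : (C.submatrix id g).det ≠ 0) :
    (B * C).rank = Fintype.card k := by
  refine le_antisymm ((rank_mul_le_left B C).trans B.rank_le_card_width) ?_
  have hsub : (B * C).submatrix f g = B.submatrix f id * C.submatrix id g :=
    submatrix_mul B C f id g Function.bijective_id
  have hdet : (B.submatrix f id * C.submatrix id g).det ≠ 0 := by
    rw [det_mul]
    exact mul_ne_zero hB hC
  calc Fintype.card k = ((B * C).submatrix f g).rank := by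
        rw [hsub, rank_of_isUnit _ ((isUnit_iff_isUnit_det _).2 hdet.isUnit)]
    _ ≤ (B * C).rank := rank_submatrix_le _ _ _

end Matrix

theorem randlora_term_full_rank_general
    (D d r : ℕ)
    (hrD : r ≤ D) (hrd : r ≤ d) :
    ∀ᵐ x ∂((gaussMat D r).prod ((gaussMat r d).prod ((gaussVec r).prod (gaussVec d)))),
      (Matrix.of x.1 * Matrix.diagonal x.2.2.1 * Matrix.of x.2.1 *
        Matrix.diagonal x.2.2.2).rank = r := by
  have := nullSingletonClass_gaussianReal (μ := 0) one_ne_zero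
  unfold gaussMat gaussVec
  have hB := ae_det_submatrix_ne_zero (fun (_ : Fin D) (_ : Fin r) => gaussianReal 0 1)
    (Fin.castLE_injective hrD) Function.injective_id
  have hA := ae_det_submatrix_ne_zero (fun (_ : Fin r) (_ : Fin d) => gaussianReal 0 1)
    Function.injective_id (Fin.castLE_injective hrd)
  have hdiag (k : ℕ) : ∀ᵐ v ∂Measure.pi fun _ : Fin k => gaussianReal 0 1, ∀ i, v i ≠ 0 :=
    ae_all_iff.2 fun i => Measure.ae_eval_ne _ i 0
  filter_upwards [Measure.quasiMeasurePreserving_fst.ae hB,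
    Measure.quasiMeasurePreserving_snd.ae (Measure.quasiMeasurePreserving_fst.ae hA),
    Measure.quasiMeasurePreserving_snd.ae (Measure.quasiMeasurePreserving_snd.ae
      (Measure.quasiMeasurePreserving_fst.ae (hdiag r))),
    Measure.quasiMeasurePreserving_snd.ae (Measure.quasiMeasurePreserving_snd.ae
      (Measure.quasiMeasurePreserving_snd.ae (hdiag d)))] with x hB hA hΛ hΓ
  rw [Matrix.mul_assoc _ (Matrix.of x.2.1)]
  refine (Matrix.rank_mul_eq_card_of_det_submatrix_ne_zero (f := Fin.castLE hrD)
    (g := Fin.castLE hrd) ?_ ?_).trans (Fintype.card_fin r)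
  · rw [Matrix.det_submatrix_mul_diagonal]
    exact mul_ne_zero hB (Finset.prod_ne_zero_iff.2 fun i _ => hΛ _)
  · rw [Matrix.det_submatrix_mul_diagonal]
    exact mul_ne_zero hA (Finset.prod_ne_zero_iff.2 fun i _ => hΓ _)

theorem randlora_term_full_rank
    (D d r : ℕ) (hD : 0 < D) (hd : 0 < d) (hr : 0 < r)
    (hrD : r ≤ D) (hrd : r ≤ d) :
    ∀ᵐ x ∂((gaussMat D r).prod ((gaussMat r d).prod ((gaussVec r).prod (gaussVec d)))),
      (Matrix.of x.1 * Matrix.diagonal x.2.2.1 * Matrix.of x.2.1 *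
        Matrix.diagonal x.2.2.2).rank = r :=
  randlora_term_full_rank_general D d r hrD hrd
end

section
/- Let d ≥ 1 and m ≥ 2 be integers and let s > 2 be a real number. Let x^{(1)}, …, x^{(m)} be i.i.d. random vectors in ℝ^d, each having i.i.d. coordinates taking the value −1 with probability 1/s, the value 0 with probability 1 − 2/s, and the value 1 with probability 1/s. Then the probability that there exist indices i ≠ j such that x^{(i)} = x^{(j)} or x^{(i)} = −x^{(j)} is at most m·(m − 1)·((s² − 4s + 6)/s²)^d. -/
open MeasureTheory

/-- The sparse ternary distribution on `ℝ`: `-1` and `1` each with probability `1/s`,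
and `0` with probability `1 - 2/s`. -/
noncomputable def ternary (s : ℝ) : Measure ℝ :=
  ENNReal.ofReal (1 / s) • Measure.dirac (-1 : ℝ) +
    ENNReal.ofReal (1 - 2 / s) • Measure.dirac (0 : ℝ) +
    ENNReal.ofReal (1 / s) • Measure.dirac (1 : ℝ)

/-- The law of a random vector in `ℝ^d` with i.i.d. sparse ternary coordinates. -/
noncomputable def ternaryPi (s : ℝ) (d : ℕ) : Measure (Fin d → ℝ) :=
  Measure.pi fun _ => ternary s

open Set

lemma ternary_prob {s : ℝ} (hs : 2 < s) : IsProbabilityMeasure (ternary s) := by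
  have h0 : (0:ℝ) < s := by linarith
  have h1 : (0:ℝ) ≤ 1 / s := by positivity
  have h2 : (0:ℝ) ≤ 1 - 2 / s := by
    rw [sub_nonneg, div_le_one h0]; linarith
  constructor
  simp only [ternary, Measure.add_apply, Measure.smul_apply, measure_univ, smul_eq_mul, mul_one]
  rw [← ENNReal.ofReal_add h1 h2, ← ENNReal.ofReal_add (by linarith) h1, ← ENNReal.ofReal_one]
  congr 1
  field_simp
  ring

lemma ternaryPi_prob {s : ℝ} (hs : 2 < s) (d : ℕ) : IsProbabilityMeasure (ternaryPi s d) := by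
  haveI := ternary_prob hs
  unfold ternaryPi; infer_instance

lemma ternary_lintegral {s : ℝ} (f : ℝ → ENNReal) :
    ∫⁻ a, f a ∂(ternary s) =
      ENNReal.ofReal (1 / s) * f (-1) + ENNReal.ofReal (1 - 2 / s) * f 0 +
        ENNReal.ofReal (1 / s) * f 1 := by
  simp [ternary, lintegral_add_measure, lintegral_smul_measure, lintegral_dirac]

lemma ternary_singleton {s : ℝ} (a : ℝ) :
    ternary s {a} = ENNReal.ofReal (1 / s) * ({a} : Set ℝ).indicator 1 (-1) +
      ENNReal.ofReal (1 - 2 / s) * ({a} : Set ℝ).indicator 1 0 +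
      ENNReal.ofReal (1 / s) * ({a} : Set ℝ).indicator 1 1 := by
  simp [ternary, Measure.dirac_apply]

lemma ternary_prod_diag {s : ℝ} (hs : 2 < s) :
    (ternary s).prod (ternary s) {p : ℝ × ℝ | p.1 = p.2} =
      ENNReal.ofReal ((s ^ 2 - 4 * s + 6) / s ^ 2) := by
  have h0 : (0:ℝ) < s := by linarith
  have h1 : (0:ℝ) ≤ 1 / s := by positivity
  have h2 : (0:ℝ) ≤ 1 - 2 / s := by rw [sub_nonneg, div_le_one h0]; linarith
  haveI := ternary_prob hs
  have hD : MeasurableSet {p : ℝ × ℝ | p.1 = p.2} :=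
    measurableSet_eq_fun measurable_fst measurable_snd
  rw [Measure.prod_apply hD]
  have hpre : ∀ a : ℝ, (Prod.mk a ⁻¹' {p : ℝ × ℝ | p.1 = p.2}) = {a} := by
    intro a; ext b; simp [eq_comm]
  simp_rw [hpre]
  rw [ternary_lintegral]
  simp only [ternary_singleton]
  norm_num
  have h1' : (0:ℝ) ≤ s⁻¹ := by positivity
  rw [← ENNReal.ofReal_mul h1', ← ENNReal.ofReal_mul h2,
    ← ENNReal.ofReal_add (by positivity) (mul_nonneg h2 h2),
    ← ENNReal.ofReal_add (by positivity) (by positivity)]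
  congr 1
  field_simp
  ring

lemma ternary_prod_negdiag {s : ℝ} (hs : 2 < s) :
    (ternary s).prod (ternary s) {p : ℝ × ℝ | p.1 = -p.2} =
      ENNReal.ofReal ((s ^ 2 - 4 * s + 6) / s ^ 2) := by
  have h0 : (0:ℝ) < s := by linarith
  have h2 : (0:ℝ) ≤ 1 - 2 / s := by rw [sub_nonneg, div_le_one h0]; linarith
  haveI := ternary_prob hs
  have hD : MeasurableSet {p : ℝ × ℝ | p.1 = -p.2} :=
    measurableSet_eq_fun measurable_fst measurable_snd.neg
  rw [Measure.prod_apply hD]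
  have hpre : ∀ a : ℝ, (Prod.mk a ⁻¹' {p : ℝ × ℝ | p.1 = -p.2}) = {-a} := by
    intro a; ext b
    simp only [mem_preimage, mem_setOf_eq, mem_singleton_iff]
    constructor
    · intro h; rw [h]; ring
    · intro h; rw [h]; ring
  simp_rw [hpre]
  rw [ternary_lintegral]
  simp only [ternary_singleton]
  norm_num
  have h1' : (0:ℝ) ≤ s⁻¹ := by positivity
  rw [← ENNReal.ofReal_mul h1', ← ENNReal.ofReal_mul h2,
    ← ENNReal.ofReal_add (by positivity) (mul_nonneg h2 h2),
    ← ENNReal.ofReal_add (by positivity) (by positivity)]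
  congr 1
  field_simp
  ring

lemma bigSet_meas {d : ℕ} {S : Set (ℝ × ℝ)} (hS : MeasurableSet S) :
    MeasurableSet {p : (Fin d → ℝ) × (Fin d → ℝ) | ∀ k, (p.1 k, p.2 k) ∈ S} := by
  rw [show {p : (Fin d → ℝ) × (Fin d → ℝ) | ∀ k, (p.1 k, p.2 k) ∈ S} =
      ⋂ k, (fun p : (Fin d → ℝ) × (Fin d → ℝ) => (p.1 k, p.2 k)) ⁻¹' S by ext p; simp]
  exact MeasurableSet.iInter fun k =>
    (((measurable_pi_apply k).comp measurable_fst).prodMk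
      ((measurable_pi_apply k).comp measurable_snd)) hS

lemma ternaryPi_prod_eq {s : ℝ} (hs : 2 < s) (d : ℕ) {S : Set (ℝ × ℝ)} (hS : MeasurableSet S) :
    (ternaryPi s d).prod (ternaryPi s d)
        {p : (Fin d → ℝ) × (Fin d → ℝ) | ∀ k, (p.1 k, p.2 k) ∈ S} =
      (ternary s).prod (ternary s) S ^ d := by
  haveI := ternary_prob hs
  have mp := measurePreserving_arrowProdEquivProdArrow ℝ ℝ (Fin d)
    (fun _ => ternary s) (fun _ => ternary s)
  rw [ternaryPi, ← mp.measure_preimage (bigSet_meas hS).nullMeasurableSet]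
  have hpre : (MeasurableEquiv.arrowProdEquivProdArrow ℝ ℝ (Fin d)) ⁻¹'
      {p : (Fin d → ℝ) × (Fin d → ℝ) | ∀ k, (p.1 k, p.2 k) ∈ S} = Set.pi univ (fun _ => S) := by
    ext f
    simp [MeasurableEquiv.arrowProdEquivProdArrow, Equiv.arrowProdEquivProdArrow]
  rw [hpre, Measure.pi_pi, Finset.prod_const, Finset.card_univ, Fintype.card_fin]

lemma map_pair {s : ℝ} (hs : 2 < s) (d m : ℕ) {i j : Fin m} (hij : i ≠ j) :
    (Measure.pi fun _ : Fin m => ternaryPi s d).map (fun x => (x i, x j)) =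
      (ternaryPi s d).prod (ternaryPi s d) := by
  haveI := ternaryPi_prob hs d
  refine (Measure.prod_eq fun u v hu hv => ?_).symm
  rw [Measure.map_apply ((measurable_pi_apply i).prodMk (measurable_pi_apply j)) (hu.prod hv)]
  classical
  have hset : (fun x : Fin m → Fin d → ℝ => (x i, x j)) ⁻¹' (u ×ˢ v) =
      Set.pi univ (Function.update (Function.update (fun _ => univ) i u) j v) := by
    ext x
    simp only [mem_preimage, mem_prod, Set.mem_pi, mem_univ, forall_true_left]
    constructor
    · rintro ⟨h1, h2⟩ k
      rcases eq_or_ne k j with rfl | hkj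
      · simp [Function.update_self, h2]
      · rcases eq_or_ne k i with rfl | hki
        · simp [Function.update_of_ne hkj, Function.update_self, h1]
        · simp [Function.update_of_ne hkj, Function.update_of_ne hki]
    · intro h
      constructor
      · have := h i
        simpa [Function.update_of_ne hij, Function.update_self] using this
      · have := h j
        simpa [Function.update_self] using this
  rw [hset, Measure.pi_pi]
  simp only [Function.apply_update (fun (_ : Fin m) (t : Set (Fin d → ℝ)) => (ternaryPi s d) t)]
  rw [Finset.prod_update_of_mem (Finset.mem_univ j)]
  rw [Finset.prod_update_of_mem (by simp [hij] : i ∈ Finset.univ \ {j})]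
  rw [Finset.prod_eq_one (fun k _ => measure_univ)]
  ring

lemma two_mul_card_filter_lt (m : ℕ) :
    2 * (Finset.univ.filter (fun p : Fin m × Fin m => p.1 < p.2)).card = m * (m - 1) := by
  classical
  set S := Finset.univ.filter (fun p : Fin m × Fin m => p.1 < p.2) with hS
  have hunion : (Finset.univ : Finset (Fin m)).offDiag = S ∪ S.image Prod.swap := by
    ext p
    simp only [Finset.mem_offDiag, Finset.mem_union, Finset.mem_image, Finset.mem_filter,
      Finset.mem_univ, true_and, hS]
    constructor
    · intro h
      rcases lt_or_gt_of_ne h with h' | h'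
      · exact Or.inl h'
      · exact Or.inr ⟨p.swap, h', Prod.swap_swap p⟩
    · rintro (h | ⟨q, hq, rfl⟩)
      · exact ne_of_lt h
      · exact (ne_of_lt hq).symm
  have hdisj : Disjoint S (S.image Prod.swap) := by
    rw [Finset.disjoint_left]
    rintro p hp hp'
    simp only [Finset.mem_image, Finset.mem_filter, Finset.mem_univ, true_and, hS] at hp hp'
    obtain ⟨q, hq, rfl⟩ := hp'
    exact absurd hp (not_lt.2 hq.le)
  have hcard := congrArg Finset.card hunion
  rw [Finset.offDiag_card, Finset.card_union_of_disjoint hdisj,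
    Finset.card_image_of_injective _ Prod.swap_injective, Finset.card_univ,
    Fintype.card_fin] at hcard
  have hmm : m * (m - 1) = m * m - m := by
    rcases m with _ | k
    · simp
    · simp [Nat.succ_sub_one, Nat.mul_sub, Nat.mul_succ]
  omega

theorem ternary_any_collinear_prob
    (d m : ℕ) (hd : 1 ≤ d) (hm : 2 ≤ m) (s : ℝ) (hs : 2 < s) :
    (Measure.pi fun _ : Fin m => ternaryPi s d)
        {x | ∃ i j : Fin m, i ≠ j ∧ (x i = x j ∨ x i = -x j)}
      ≤ ENNReal.ofReal ((m : ℝ) * ((m : ℝ) - 1) * ((s ^ 2 - 4 * s + 6) / s ^ 2) ^ d) := by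
  classical
  have h0 : (0:ℝ) < s := by linarith
  have hq0 : (0:ℝ) ≤ (s ^ 2 - 4 * s + 6) / s ^ 2 := by
    apply div_nonneg
    · nlinarith
    · positivity
  haveI := ternary_prob hs
  haveI := ternaryPi_prob hs d
  set μ := (Measure.pi fun _ : Fin m => ternaryPi s d) with hμ
  set C : ENNReal := ENNReal.ofReal ((s ^ 2 - 4 * s + 6) / s ^ 2) with hCdef
  set S := Finset.univ.filter (fun p : Fin m × Fin m => p.1 < p.2) with hSdef
  have hpairm : ∀ p : Fin m × Fin m,
      Measurable (fun x : Fin m → Fin d → ℝ => (x p.1, x p.2)) := fun p =>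
    (measurable_pi_apply p.1).prodMk (measurable_pi_apply p.2)
  have hDeq : MeasurableSet {r : ℝ × ℝ | r.1 = r.2} :=
    measurableSet_eq_fun measurable_fst measurable_snd
  have hDneg : MeasurableSet {r : ℝ × ℝ | r.1 = -r.2} :=
    measurableSet_eq_fun measurable_fst measurable_snd.neg
  have hA : ∀ p : Fin m × Fin m, p.1 ≠ p.2 → μ {x | x p.1 = x p.2} = C ^ d := by
    intro p hp
    have hset : {x : Fin m → Fin d → ℝ | x p.1 = x p.2} =
        (fun x : Fin m → Fin d → ℝ => (x p.1, x p.2)) ⁻¹'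
          {q : (Fin d → ℝ) × (Fin d → ℝ) | ∀ k, (q.1 k, q.2 k) ∈ {r : ℝ × ℝ | r.1 = r.2}} := by
      ext x; simp [funext_iff]
    rw [hset, ← Measure.map_apply (hpairm p) (bigSet_meas hDeq), hμ, map_pair hs d m hp,
      ternaryPi_prod_eq hs d hDeq, ternary_prod_diag hs]
  have hB : ∀ p : Fin m × Fin m, p.1 ≠ p.2 → μ {x | x p.1 = -x p.2} = C ^ d := by
    intro p hp
    have hset : {x : Fin m → Fin d → ℝ | x p.1 = -x p.2} =
        (fun x : Fin m → Fin d → ℝ => (x p.1, x p.2)) ⁻¹'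
          {q : (Fin d → ℝ) × (Fin d → ℝ) | ∀ k, (q.1 k, q.2 k) ∈ {r : ℝ × ℝ | r.1 = -r.2}} := by
      ext x; simp [funext_iff]
    rw [hset, ← Measure.map_apply (hpairm p) (bigSet_meas hDneg), hμ, map_pair hs d m hp,
      ternaryPi_prod_eq hs d hDneg, ternary_prod_negdiag hs]
  have hsub : {x : Fin m → Fin d → ℝ | ∃ i j : Fin m, i ≠ j ∧ (x i = x j ∨ x i = -x j)} ⊆
      ⋃ p ∈ S, ({x : Fin m → Fin d → ℝ | x p.1 = x p.2} ∪ {x | x p.1 = -x p.2}) := by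
    rintro x ⟨i, j, hij, hcase⟩
    rcases lt_or_gt_of_ne hij with h | h
    · refine Set.mem_biUnion (show ((i, j) : Fin m × Fin m) ∈ S by simp [hSdef, h]) ?_
      rcases hcase with h1 | h1
      · exact Or.inl h1
      · exact Or.inr h1
    · refine Set.mem_biUnion (show ((j, i) : Fin m × Fin m) ∈ S by simp [hSdef, h]) ?_
      rcases hcase with h1 | h1
      · exact Or.inl h1.symm
      · refine Or.inr ?_
        show x j = -x i
        rw [h1, neg_neg]
  have hcount : (↑(m * (m - 1)) : ENNReal) * C ^ d =
      ENNReal.ofReal ((m : ℝ) * ((m : ℝ) - 1) * ((s ^ 2 - 4 * s + 6) / s ^ 2) ^ d) := by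
    have hcast : ((m * (m - 1) : ℕ) : ℝ) = (m : ℝ) * ((m : ℝ) - 1) := by
      have h1m : 1 ≤ m := by omega
      push_cast [Nat.cast_sub h1m]
      ring
    rw [ENNReal.ofReal_mul (by rw [← hcast]; positivity), ENNReal.ofReal_pow hq0, ← hcast,
      ENNReal.ofReal_natCast, hCdef]
  calc μ {x | ∃ i j : Fin m, i ≠ j ∧ (x i = x j ∨ x i = -x j)}
      ≤ μ (⋃ p ∈ S, ({x : Fin m → Fin d → ℝ | x p.1 = x p.2} ∪ {x | x p.1 = -x p.2})) :=
        measure_mono hsub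
    _ ≤ ∑ p ∈ S, μ ({x : Fin m → Fin d → ℝ | x p.1 = x p.2} ∪ {x | x p.1 = -x p.2}) :=
        measure_biUnion_finset_le S _
    _ ≤ ∑ p ∈ S, (C ^ d + C ^ d) := by
        refine Finset.sum_le_sum fun p hp => ?_
        have hne : p.1 ≠ p.2 := (Finset.mem_filter.1 hp).2.ne
        refine le_trans (measure_union_le _ _) ?_
        rw [hA p hne, hB p hne]
    _ = (↑(m * (m - 1)) : ENNReal) * C ^ d := by
        rw [Finset.sum_const, nsmul_eq_mul, ← two_mul_card_filter_lt m, ← hSdef]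
        push_cast
        ring
    _ = ENNReal.ofReal ((m : ℝ) * ((m : ℝ) - 1) * ((s ^ 2 - 4 * s + 6) / s ^ 2) ^ d) := hcount
end
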